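/- arXiv:2403.06896 — 2 statements merged into one kernel-verified Lean document; each statement's English description precedes it below -/
import Mathlib

section
/- Let n ≥ 1 and for each k ∈ Fin n let ψ_k ∈ ℂ² be a unit vector, and let each party k have two measurements given by orthonormal bases {u_{k,i,0}, u_{k,i,1}} of ℂ² for i ∈ Fin 2. Consider the measurement scenario with X = Fin n × Fin 2 (measurement (k,i) is party k's i-th basis), O = Fin 2, and contexts C_c = {(k, c(k)) : k ∈ Fin n} for each choice function c : Fin n → Fin 2. Then the Born-rule empirical model of the product state ⊗_k ψ_k, given by e_{C_c}(s) = |⟨⊗_k u_{k, c(k), s(k)}, ⊗_k ψ_k⟩|² = Π_k |⟨u_{k,c(k),s(k)}, ψ_k⟩|², is noncontextual: there exists a probability distribution d on the global assignments g : Fin n × Fin 2 → Fin 2 whose marginal to each context C_c equals e_{C_c}. -/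
/-!
For a product state the Born probabilities factor over the parties, and for each measurement
`(k, i)` the numbers `t ↦ |⟨u_{k,i,t}, ψ_k⟩|²` form a probability distribution on `Fin 2`
(Parseval in `ℂ²`). Letting all `2n` measurements be independent with these distributions gives a
distribution on global assignments; its marginal on a context is the product of the factors of
that context, because every factor outside the context sums to `1`.
-/

open scoped ComplexConjugate

/-- Standard Hermitian inner product on `ℂ²` (conjugate-linear in the first slot). -/
noncomputable def ip2 (u v : Fin 2 → ℂ) : ℂ := ∑ i, conj (u i) * v i

/-- `n`-fold tensor product of vectors in `ℂ²`, as a function on `Fin n → Fin 2`. -/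
noncomputable def tensN (n : ℕ) (v : Fin n → Fin 2 → ℂ) : (Fin n → Fin 2) → ℂ :=
  fun f => ∏ k, v k (f k)

/-- Standard Hermitian inner product on `(ℂ²)^{⊗ n}` (conjugate-linear in the
first slot). -/
noncomputable def ipN (n : ℕ) (u v : (Fin n → Fin 2) → ℂ) : ℂ :=
  ∑ f, conj (u f) * v f

open Finset Function

lemma ipN_tensN_tensN (n : ℕ) (a b : Fin n → Fin 2 → ℂ) :
    ipN n (tensN n a) (tensN n b) = ∏ k, ip2 (a k) (b k) := by
  simp only [ipN, tensN, ip2, Finset.prod_univ_sum, Fintype.piFinset_univ, map_prod,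
    ← Finset.prod_mul_distrib]

lemma ip2_eq_inner (u v : Fin 2 → ℂ) :
    ip2 u v = inner ℂ (WithLp.toLp 2 u) (WithLp.toLp 2 v) := by
  simp [ip2, EuclideanSpace.inner_toLp_toLp, dotProduct, mul_comm]

lemma sum_norm_ip2_sq_of_orthonormal (u : Fin 2 → Fin 2 → ℂ)
    (hu : ∀ s t, ip2 (u s) (u t) = if s = t then 1 else 0) (ψ : Fin 2 → ℂ) :
    ∑ t, ‖ip2 (u t) ψ‖ ^ 2 = ∑ j, ‖ψ j‖ ^ 2 := by
  have hon : Orthonormal ℂ (fun t => WithLp.toLp 2 (u t)) := by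
    rw [orthonormal_iff_ite]
    simpa only [← ip2_eq_inner] using hu
  let b := (basisOfOrthonormalOfCardEqFinrank hon (by simp)).toOrthonormalBasis
    (by simpa using hon)
  have hparseval := b.sum_sq_norm_inner_right (WithLp.toLp 2 ψ)
  simpa [b, ← ip2_eq_inner, EuclideanSpace.norm_sq_eq] using hparseval

lemma sum_filter_prod_eq_prod_of_injective {ι κ α R : Type*} [Fintype ι] [DecidableEq ι]
    [Fintype κ] [Fintype α] [DecidableEq α] [CommSemiring R]
    (p : ι → α → R) (hp : ∀ i, ∑ a, p i a = 1) {e : κ → ι} (he : Injective e) (s : κ → α) :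
    ∑ g ∈ univ.filter (fun g : ι → α => ∀ k, g (e k) = s k), ∏ i, p i (g i)
      = ∏ k, p (e k) (s k) := by
  set t : ι → Finset α := fun i => univ.filter (fun a => ∀ k, e k = i → a = s k)
  have hfilter : univ.filter (fun g : ι → α => ∀ k, g (e k) = s k) = Fintype.piFinset t := by
    ext g
    simp only [mem_filter, mem_univ, true_and, Fintype.mem_piFinset, t]
    exact ⟨fun h i k hk => hk ▸ h k, fun h k => h _ k rfl⟩
  rw [hfilter, ← prod_univ_sum]
  refine (Fintype.prod_of_injective e he _ _ (fun i hi => ?_) (fun k => ?_)).symm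
  · have ht : t i = univ := by
      simp only [t, filter_eq_self, mem_univ, true_implies]
      exact fun a k hk => absurd ⟨k, hk⟩ hi
    rw [ht, hp]
  · have ht : t (e k) = {s k} := by
      ext a
      simp only [t, mem_filter, mem_univ, true_and, mem_singleton]
      exact ⟨fun h => h k rfl, fun h l hl => he hl ▸ h⟩
    rw [ht, sum_singleton]

theorem product_state_born_model_noncontextual_general
    (n : ℕ)
    (ψ : Fin n → Fin 2 → ℂ) (hψ : ∀ k, ∑ i, ‖ψ k i‖ ^ 2 = 1)
    (u : Fin n → Fin 2 → Fin 2 → Fin 2 → ℂ)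
    (hu : ∀ k i s t, ip2 (u k i s) (u k i t) = if s = t then 1 else 0) :
    ∃ d : (Fin n × Fin 2 → Fin 2) → ℝ,
      (∀ g, 0 ≤ d g) ∧ (∑ g, d g) = 1 ∧
      ∀ c s : Fin n → Fin 2,
        (∑ g ∈ Finset.univ.filter
            (fun g : Fin n × Fin 2 → Fin 2 => ∀ k, g (k, c k) = s k), d g)
          = ‖ipN n (tensN n (fun k => u k (c k) (s k))) (tensN n ψ)‖ ^ 2 ∧
        ‖ipN n (tensN n (fun k => u k (c k) (s k))) (tensN n ψ)‖ ^ 2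
          = ∏ k, ‖ip2 (u k (c k) (s k)) (ψ k)‖ ^ 2 := by
  set q : Fin n × Fin 2 → Fin 2 → ℝ := fun x t => ‖ip2 (u x.1 x.2 t) (ψ x.1)‖ ^ 2
  have hq : ∀ x, ∑ t, q x t = 1 := fun x =>
    (sum_norm_ip2_sq_of_orthonormal _ (hu x.1 x.2) _).trans (hψ x.1)
  refine ⟨fun g => ∏ x, q x (g x), fun g => by positivity, ?_, fun c s => ?_⟩
  · rw [← Fintype.prod_sum]
    exact prod_eq_one fun x _ => hq x
  · have hborn : ‖ipN n (tensN n (fun k => u k (c k) (s k))) (tensN n ψ)‖ ^ 2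
        = ∏ k, ‖ip2 (u k (c k) (s k)) (ψ k)‖ ^ 2 := by
      rw [ipN_tensN_tensN, norm_prod, prod_pow]
    refine ⟨?_, hborn⟩
    rw [hborn]
    convert sum_filter_prod_eq_prod_of_injective q hq
      (e := fun k => (k, c k)) (fun _ _ h => congrArg Prod.fst h) s

theorem product_state_born_model_noncontextual
    (n : ℕ) (hn : 1 ≤ n)
    (ψ : Fin n → Fin 2 → ℂ) (hψ : ∀ k, ∑ i, ‖ψ k i‖ ^ 2 = 1)
    (u : Fin n → Fin 2 → Fin 2 → Fin 2 → ℂ)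
    (hu : ∀ k i s t, ip2 (u k i s) (u k i t) = if s = t then 1 else 0) :
    ∃ d : (Fin n × Fin 2 → Fin 2) → ℝ,
      (∀ g, 0 ≤ d g) ∧ (∑ g, d g) = 1 ∧
      ∀ c s : Fin n → Fin 2,
        (∑ g ∈ Finset.univ.filter
            (fun g : Fin n × Fin 2 → Fin 2 => ∀ k, g (k, c k) = s k), d g)
          = ‖ipN n (tensN n (fun k => u k (c k) (s k))) (tensN n ψ)‖ ^ 2 ∧
        ‖ipN n (tensN n (fun k => u k (c k) (s k))) (tensN n ψ)‖ ^ 2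
          = ∏ k, ‖ip2 (u k (c k) (s k)) (ψ k)‖ ^ 2 :=
  product_state_born_model_noncontextual_general n ψ hψ u hu
end

section
/- Let |GHZ₂⟩ = (|0⟩⊗|0⟩ + |1⟩⊗|1⟩)/√2 and consider the two-party Bell scenario in which both Alice's and Bob's two measurements are given by the orthonormal bases B(π/2, π/8) = {|π/2, π/8⟩, |π/2, π + π/8⟩} and B(π/2, 5π/8) = {|π/2, 5π/8⟩, |π/2, π + 5π/8⟩}. Then the contextual fraction of the Born-rule empirical model of |GHZ₂⟩ with respect to this scenario equals √2 − 1. -/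
/-!
For equatorial measurements the Born model of `|GHZ₂⟩` has correlators
`cos (φ_A + φ_B)`; with the angles `π/8, 5π/8` these are `√2/2` in context `(a₁, b₁)` and
`-√2/2` in the other three, so the model is the isotropic CHSH box of visibility `√2/2`.

The CHSH value is affine in the model, at most `4` on every model and at most `2` on
noncontextual ones, so in a decomposition `λ e^NC + (1 - λ) e'` of the `v`-box we get
`4v ≤ 2λ + 4(1 - λ)`, i.e. `λ ≤ 2 - 2v`. The bound is attained: the `1/2`-box is
noncontextual, the `1`-box (the PR box) is a model, and the `v`-box is `(2 - 2v)` times the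
first plus `(2v - 1)` times the second. Hence `NCF = 2 - √2`.
-/

open scoped ComplexConjugate

/-- Tensor product `u ⊗ v ∈ ℂ² ⊗ ℂ²`, as a function on `Fin 2 × Fin 2`. -/
noncomputable def tens (u v : Fin 2 → ℂ) : Fin 2 × Fin 2 → ℂ := fun p => u p.1 * v p.2

/-- Standard Hermitian inner product on `ℂ² ⊗ ℂ²` (conjugate-linear in the
first slot). -/
noncomputable def ip4 (u v : Fin 2 × Fin 2 → ℂ) : ℂ := ∑ p, conj (u p) * v p

/-- Bloch vector `|θ,φ⟩ = cos(θ/2)|0⟩ + e^{iφ} sin(θ/2)|1⟩`. -/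
noncomputable def bloch (θ φ : ℝ) : Fin 2 → ℂ :=
  ![(Real.cos (θ / 2) : ℂ), Complex.exp (φ * Complex.I) * (Real.sin (θ / 2) : ℂ)]

/-- The orthonormal basis `B(θ,φ) = {|θ,φ⟩, |π−θ,π+φ⟩}` of `ℂ²`, indexed by the
outcome. -/
noncomputable def Bbasis (θ φ : ℝ) : Fin 2 → Fin 2 → ℂ :=
  ![bloch θ φ, bloch (Real.pi - θ) (Real.pi + φ)]

/-- The Born-rule empirical model of the state `ψ ∈ ℂ² ⊗ ℂ²` when Alice's
measurement `a_{i+1}` is given by the orthonormal basis `A i` and Bob's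
measurement `b_{j+1}` by the orthonormal basis `B j`:
`e_{{a_i,b_j}}(s,t) = |⟨α_{i,s} ⊗ β_{j,t}, ψ⟩|²`. -/
noncomputable def born (A B : Fin 2 → Fin 2 → Fin 2 → ℂ) (ψ : Fin 2 × Fin 2 → ℂ) :
    Fin 2 → Fin 2 → Fin 2 → Fin 2 → ℝ := fun i j s t =>
  ‖ip4 (tens (A i s) (B j t)) ψ‖ ^ 2

/-- An empirical model on the two-party Bell scenario: for each context
`{a_{i+1}, b_{j+1}}` a probability distribution on joint outcomes `(s, t)`. -/
def IsModel (e : Fin 2 → Fin 2 → Fin 2 → Fin 2 → ℝ) : Prop :=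
  (∀ i j s t, 0 ≤ e i j s t) ∧ ∀ i j, (∑ s, ∑ t, e i j s t) = 1

/-- Noncontextuality: a global probability distribution on assignments
`g : {a₁,a₂,b₁,b₂} → {0,1}` (with `X` encoded as `Fin 2 ⊕ Fin 2`, `inl i = a_{i+1}`,
`inr j = b_{j+1}`) marginalises to every context. -/
def Noncontextual (e : Fin 2 → Fin 2 → Fin 2 → Fin 2 → ℝ) : Prop :=
  ∃ d : (Fin 2 ⊕ Fin 2 → Fin 2) → ℝ,
    (∀ g, 0 ≤ d g) ∧ (∑ g, d g) = 1 ∧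
    ∀ i j s t, (∑ g ∈ Finset.univ.filter
        (fun g : Fin 2 ⊕ Fin 2 → Fin 2 => g (.inl i) = s ∧ g (.inr j) = t), d g)
      = e i j s t

/-- The noncontextual fraction of an empirical model. -/
noncomputable def NCF (e : Fin 2 → Fin 2 → Fin 2 → Fin 2 → ℝ) : ℝ :=
  sSup {l : ℝ | 0 ≤ l ∧ l ≤ 1 ∧
    ∃ eNC e' : Fin 2 → Fin 2 → Fin 2 → Fin 2 → ℝ,
      IsModel eNC ∧ Noncontextual eNC ∧ IsModel e' ∧
      ∀ i j s t, e i j s t = l * eNC i j s t + (1 - l) * e' i j s t}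

/-- The contextual fraction of an empirical model. -/
noncomputable def CF (e : Fin 2 → Fin 2 → Fin 2 → Fin 2 → ℝ) : ℝ := 1 - NCF e

/-- The two-qubit GHZ state `(|00⟩ + |11⟩)/√2`. -/
noncomputable def ghz : Fin 2 × Fin 2 → ℂ := fun p =>
  if p.1 = p.2 then ((Real.sqrt 2)⁻¹ : ℂ) else 0

/-- Alice's (= Bob's) measurements: `a₁ = B(π/2, π/8)` and `a₂ = B(π/2, 5π/8)`. -/
noncomputable def meas : Fin 2 → Fin 2 → Fin 2 → ℂ :=
  ![Bbasis (Real.pi / 2) (Real.pi / 8), Bbasis (Real.pi / 2) (5 * Real.pi / 8)]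

open Finset

section CHSH

def outcomeSign (s t : Fin 2) : ℝ := if s = t then 1 else -1

def chshSign (i j : Fin 2) : ℝ := if i = 0 ∧ j = 0 then 1 else -1

noncomputable def correlator (e : Fin 2 → Fin 2 → Fin 2 → Fin 2 → ℝ)
    (i j : Fin 2) : ℝ :=
  ∑ s, ∑ t, outcomeSign s t * e i j s t

noncomputable def chsh (e : Fin 2 → Fin 2 → Fin 2 → Fin 2 → ℝ) : ℝ :=
  ∑ i, ∑ j, chshSign i j * correlator e i j

lemma abs_outcomeSign (s t : Fin 2) : |outcomeSign s t| = 1 := by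
  unfold outcomeSign; split_ifs <;> simp

lemma abs_chshSign (i j : Fin 2) : |chshSign i j| = 1 := by
  unfold chshSign; split_ifs <;> simp

lemma chsh_mul_add_mul (e f : Fin 2 → Fin 2 → Fin 2 → Fin 2 → ℝ) (a b : ℝ) :
    chsh (fun i j s t => a * e i j s t + b * f i j s t) = a * chsh e + b * chsh f := by
  simp only [chsh, correlator, mul_add, sum_add_distrib, mul_sum]
  congr 1 <;> simp only [mul_left_comm a, mul_left_comm b]

variable {e : Fin 2 → Fin 2 → Fin 2 → Fin 2 → ℝ}

lemma abs_correlator_le_one (he : IsModel e) (i j : Fin 2) :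
    |correlator e i j| ≤ 1 :=
  calc |correlator e i j| ≤ ∑ s, ∑ t, |outcomeSign s t * e i j s t| :=
        (abs_sum_le_sum_abs _ _).trans (sum_le_sum fun s _ => abs_sum_le_sum_abs _ _)
    _ = ∑ s, ∑ t, e i j s t := by
        simp only [abs_mul, abs_outcomeSign, one_mul, abs_of_nonneg (he.1 i j _ _)]
    _ = 1 := he.2 i j

lemma chsh_le_four (he : IsModel e) : chsh e ≤ 4 := by
  have h : ∀ i j, chshSign i j * correlator e i j ≤ 1 := fun i j => (le_abs_self _).trans <| by
    rw [abs_mul, abs_chshSign, one_mul]; exact abs_correlator_le_one he i j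
  calc chsh e ≤ ∑ _i : Fin 2, ∑ _j : Fin 2, (1 : ℝ) :=
        sum_le_sum fun i _ => sum_le_sum fun j _ => h i j
    _ = 4 := by norm_num

noncomputable def chshValue (g : Fin 2 ⊕ Fin 2 → Fin 2) : ℝ :=
  ∑ i, ∑ j, chshSign i j * outcomeSign (g (.inl i)) (g (.inr j))

lemma abs_chshValue (g : Fin 2 ⊕ Fin 2 → Fin 2) : |chshValue g| = 2 := by
  simp only [chshValue, Fin.sum_univ_two]
  generalize g (.inl 0) = a₀, g (.inl 1) = a₁, g (.inr 0) = b₀, g (.inr 1) = b₁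
  fin_cases a₀ <;> fin_cases a₁ <;> fin_cases b₀ <;> fin_cases b₁ <;>
    norm_num [chshSign, outcomeSign]

lemma correlator_eq_sum_of_marginals {d : (Fin 2 ⊕ Fin 2 → Fin 2) → ℝ}
    (hd : ∀ i j s t, ∑ g ∈ univ.filter
      (fun g : Fin 2 ⊕ Fin 2 → Fin 2 => g (.inl i) = s ∧ g (.inr j) = t), d g = e i j s t)
    (i j : Fin 2) :
    correlator e i j = ∑ g, d g * outcomeSign (g (.inl i)) (g (.inr j)) := by
  rw [← sum_fiberwise univ (fun g => (g (.inl i), g (.inr j)))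
    (fun g => d g * outcomeSign (g (.inl i)) (g (.inr j))), Fintype.sum_prod_type, correlator]
  refine sum_congr rfl fun s _ => sum_congr rfl fun t _ => ?_
  simp only [← hd i j s t, mul_sum, Prod.mk.injEq]
  exact sum_congr rfl fun g hg => by rw [(mem_filter.1 hg).2.1, (mem_filter.1 hg).2.2, mul_comm]

lemma chsh_le_two_of_noncontextual (he : Noncontextual e) : chsh e ≤ 2 := by
  obtain ⟨d, hd0, hd1, hd⟩ := he
  have hsum : chsh e = ∑ g, d g * chshValue g := by
    simp only [chsh, correlator_eq_sum_of_marginals hd, chshValue, mul_sum]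
    refine ((sum_congr rfl fun i _ => sum_comm).trans sum_comm).trans
      (sum_congr rfl fun g _ => sum_congr rfl fun i _ => sum_congr rfl fun j _ => by ring)
  calc chsh e = ∑ g, d g * chshValue g := hsum
    _ ≤ ∑ g, d g * 2 := sum_le_sum fun g _ =>
        mul_le_mul_of_nonneg_left ((le_abs_self _).trans (abs_chshValue g).le) (hd0 g)
    _ = 2 := by rw [← sum_mul, hd1, one_mul]

lemma noncontextual_weight_le {eNC e' : Fin 2 → Fin 2 → Fin 2 → Fin 2 → ℝ} {l : ℝ}
    (hl0 : 0 ≤ l) (hl1 : l ≤ 1) (hNC : Noncontextual eNC) (he' : IsModel e')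
    (h : ∀ i j s t, e i j s t = l * eNC i j s t + (1 - l) * e' i j s t) :
    l ≤ (4 - chsh e) / 2 := by
  have hmix : chsh e = l * chsh eNC + (1 - l) * chsh e' := by
    rw [← chsh_mul_add_mul]; congr; funext i j s t; exact h i j s t
  nlinarith [mul_le_mul_of_nonneg_left (chsh_le_two_of_noncontextual hNC) hl0,
    mul_le_mul_of_nonneg_left (chsh_le_four he') (sub_nonneg.2 hl1)]

end CHSH

noncomputable def chshBox (v : ℝ) : Fin 2 → Fin 2 → Fin 2 → Fin 2 → ℝ :=
  fun i j s t => (1 + v * chshSign i j * outcomeSign s t) / 4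

lemma chsh_chshBox (v : ℝ) : chsh (chshBox v) = 4 * v := by
  norm_num [chsh, correlator, chshBox, Fin.sum_univ_two, chshSign, outcomeSign]; ring

lemma isModel_chshBox {v : ℝ} (hv : |v| ≤ 1) : IsModel (chshBox v) := by
  refine ⟨fun i j s t => ?_, fun i j => ?_⟩
  · have : |v * chshSign i j * outcomeSign s t| ≤ 1 := by
      rwa [abs_mul, abs_mul, abs_chshSign, abs_outcomeSign, mul_one, mul_one]
    simp only [chshBox]; linarith [neg_abs_le (v * chshSign i j * outcomeSign s t)]
  · norm_num [chshBox, Fin.sum_univ_two, outcomeSign]; ring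

lemma sum_assignments_eq (f : (Fin 2 ⊕ Fin 2 → Fin 2) → ℝ) :
    ∑ g, f g = ∑ a, ∑ a', ∑ b, ∑ b', f (Sum.elim ![a, a'] ![b, b']) := by
  rw [← (Equiv.sumArrowEquivProdArrow _ _ _).symm.sum_comp, Fintype.sum_prod_type]
  simp only [← (piFinTwoEquiv fun _ => Fin 2).symm.sum_comp, Fintype.sum_prod_type]
  rfl

lemma noncontextual_chshBox_half : Noncontextual (chshBox (1 / 2)) := by
  -- since `chshValue g = ±2`, this is uniform on the eight assignments of CHSH value `2`
  refine ⟨fun g => (2 + chshValue g) / 32, fun g => ?_, ?_, fun i j s t => ?_⟩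
  · linarith [neg_abs_le (chshValue g), abs_chshValue g]
  · rw [sum_assignments_eq]
    norm_num [chshValue, Fin.sum_univ_two, chshSign, outcomeSign]
  · rw [sum_filter, sum_assignments_eq]
    fin_cases i <;> fin_cases j <;> fin_cases s <;> fin_cases t <;>
      norm_num [chshValue, chshBox, Fin.sum_univ_two, chshSign, outcomeSign]

theorem NCF_chshBox {v : ℝ} (hv : 1 / 2 ≤ v) (hv1 : v ≤ 1) : NCF (chshBox v) = 2 - 2 * v := by
  refine IsGreatest.csSup_eq ⟨⟨by linarith, by linarith, chshBox (1 / 2), chshBox 1,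
    isModel_chshBox (by norm_num [abs_of_pos]), noncontextual_chshBox_half,
    isModel_chshBox (by norm_num), fun i j s t => by simp only [chshBox]; ring⟩, ?_⟩
  rintro l ⟨hl0, hl1, eNC, e', -, hNC, he', h⟩
  have := noncontextual_weight_le hl0 hl1 hNC he' h
  rw [chsh_chshBox] at this
  linarith

lemma ip4_tens_ghz (u v : Fin 2 → ℂ) :
    ip4 (tens u v) ghz = conj (u 0 * v 0 + u 1 * v 1) / Real.sqrt 2 := by
  simp [ip4, tens, ghz, Fintype.sum_prod_type, Fin.sum_univ_two]
  ring

lemma norm_one_add_exp_sq (θ : ℝ) :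
    ‖1 + Complex.exp (θ * Complex.I)‖ ^ 2 = 2 + 2 * Real.cos θ := by
  rw [Complex.sq_norm, Complex.normSq_apply]
  simp only [Complex.add_re, Complex.add_im, Complex.one_re, Complex.one_im,
    Complex.exp_ofReal_mul_I_re, Complex.exp_ofReal_mul_I_im]
  nlinarith [Real.sin_sq_add_cos_sq θ]

lemma norm_ip4_bloch_ghz_sq (φA φB : ℝ) :
    ‖ip4 (tens (bloch (Real.pi / 2) φA) (bloch (Real.pi / 2) φB)) ghz‖ ^ 2
      = (1 + Real.cos (φA + φB)) / 4 := by
  have hπ4 : Real.pi / 2 / 2 = Real.pi / 4 := by ring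
  have hsum : bloch (Real.pi / 2) φA 0 * bloch (Real.pi / 2) φB 0
      + bloch (Real.pi / 2) φA 1 * bloch (Real.pi / 2) φB 1
      = (1 + Complex.exp ((φA + φB : ℝ) * Complex.I)) / 2 := by
    have h2 : ((Real.sqrt 2 / 2 : ℝ) : ℂ) ^ 2 = 1 / 2 := by
      rw [← Complex.ofReal_pow, div_pow, Real.sq_sqrt zero_le_two]; push_cast; ring
    simp only [bloch, hπ4, Real.cos_pi_div_four, Real.sin_pi_div_four, Matrix.cons_val_zero,
      Matrix.cons_val_one, Complex.ofReal_add, add_mul, Complex.exp_add]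
    linear_combination (1 + Complex.exp (φA * Complex.I) * Complex.exp (φB * Complex.I)) * h2
  rw [ip4_tens_ghz, hsum, norm_div, Complex.norm_conj, norm_div, div_pow, div_pow,
    norm_one_add_exp_sq, Complex.norm_real, Real.norm_of_nonneg (Real.sqrt_nonneg 2),
    Real.sq_sqrt zero_le_two, Complex.norm_two]
  ring

lemma norm_ip4_Bbasis_ghz_sq (φA φB : ℝ) (s t : Fin 2) :
    ‖ip4 (tens (Bbasis (Real.pi / 2) φA s) (Bbasis (Real.pi / 2) φB t)) ghz‖ ^ 2
      = (1 + outcomeSign s t * Real.cos (φA + φB)) / 4 := by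
  have hπ : Real.pi - Real.pi / 2 = Real.pi / 2 := by ring
  fin_cases s <;> fin_cases t <;>
    simp only [Fin.zero_eta, Fin.mk_one, Bbasis, Matrix.cons_val_zero, Matrix.cons_val_one, hπ,
      norm_ip4_bloch_ghz_sq, outcomeSign] <;> norm_num
  · rw [show φA + (Real.pi + φB) = φA + φB + Real.pi by ring, Real.cos_add_pi]
  · rw [show Real.pi + φA + φB = φA + φB + Real.pi by ring, Real.cos_add_pi]
  · rw [show Real.pi + φA + (Real.pi + φB) = φA + φB + 2 * Real.pi by ring,
      Real.cos_add_two_pi]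

lemma born_meas_ghz : born meas meas ghz = chshBox (Real.sqrt 2 / 2) := by
  have h3 : Real.cos (Real.pi / 8 + 5 * Real.pi / 8) = -(Real.sqrt 2 / 2) := by
    rw [show Real.pi / 8 + 5 * Real.pi / 8 = Real.pi - Real.pi / 4 by ring, Real.cos_pi_sub,
      Real.cos_pi_div_four]
  funext i j s t
  fin_cases i <;> fin_cases j <;>
    simp only [born, meas, Fin.zero_eta, Fin.mk_one, Matrix.cons_val_zero, Matrix.cons_val_one,
      norm_ip4_Bbasis_ghz_sq, chshBox, chshSign] <;> norm_num
  · rw [show Real.pi / 8 + Real.pi / 8 = Real.pi / 4 by ring, Real.cos_pi_div_four]; ring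
  · rw [h3]; ring
  · rw [add_comm, h3]; ring
  · rw [show 5 * Real.pi / 8 + 5 * Real.pi / 8 = Real.pi / 4 + Real.pi by ring, Real.cos_add_pi,
      Real.cos_pi_div_four]; ring

/-- the contextual fraction of the GHZ state with respect to the
scenario `S(B(π/2,π/8), B(π/2,5π/8))` equals `√2 − 1`. -/
theorem ghz_pi_eighth_contextual_fraction :
    CF (born meas meas ghz) = Real.sqrt 2 - 1 := by
  have hlo : 1 ≤ Real.sqrt 2 := Real.one_le_sqrt.2 one_le_two
  have hhi : Real.sqrt 2 ≤ 2 := (Real.sqrt_le_left zero_le_two).2 (by norm_num)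
  rw [CF, born_meas_ghz, NCF_chshBox (by linarith) (by linarith)]
  ring
end
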